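/- Let A be an N×N matrix over the rationals. Suppose deg det(I - A·z) = N - r and deg sum(adj(I - A·z)) = N - 1 - s. Then the rational function sum(adj(A - E·z))/det(A - E·z) is defined at z = 0 (i.e., the order of vanishing at 0 of the numerator is at least that of the denominator) if and only if s ≥ r. -/

import Mathlib

open Polynomial Matrix

/-- The sum of all the entries of a matrix. -/
def sumEntries {R : Type*} [AddCommMonoid R] {N : ℕ} (M : Matrix (Fin N) (Fin N) R) : R :=
  ∑ i, ∑ j, M i j

/-- `det(I - A·z)`. -/
noncomputable def detIsubAz {N : ℕ} (A : Matrix (Fin N) (Fin N) ℚ) : ℚ[X] :=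
  ((1 : Matrix (Fin N) (Fin N) ℚ[X]) - (X : ℚ[X]) • A.map C).det

/-- `det(A - I·z)`. -/
noncomputable def detAsubIz {N : ℕ} (A : Matrix (Fin N) (Fin N) ℚ) : ℚ[X] :=
  (A.map C - (X : ℚ[X]) • (1 : Matrix (Fin N) (Fin N) ℚ[X])).det

/-- `sum(adj(I - A·z))`. -/
noncomputable def sumAdjIsubAz {N : ℕ} (A : Matrix (Fin N) (Fin N) ℚ) : ℚ[X] :=
  sumEntries (adjugate ((1 : Matrix (Fin N) (Fin N) ℚ[X]) - (X : ℚ[X]) • A.map C))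

/-- `sum(adj(A - I·z))`. -/
noncomputable def sumAdjAsubIz {N : ℕ} (A : Matrix (Fin N) (Fin N) ℚ) : ℚ[X] :=
  sumEntries (adjugate (A.map C - (X : ℚ[X]) • (1 : Matrix (Fin N) (Fin N) ℚ[X])))

section aux

open LaurentPolynomial hiding C

lemma ringHom_sumEntries {S : Type*} [CommRing S] {N : ℕ} (f : ℚ[X] →+* S)
    (M : Matrix (Fin N) (Fin N) ℚ[X]) : f (sumEntries M) = sumEntries (M.map f) := by
  simp [sumEntries, map_sum, Matrix.map_apply]

lemma sumEntries_smul {S : Type*} [CommRing S] {N : ℕ} (c : S)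
    (M : Matrix (Fin N) (Fin N) S) : sumEntries (c • M) = c * sumEntries M := by
  simp [sumEntries, Finset.mul_sum, Matrix.smul_apply, smul_eq_mul]

/-- The key reversal identity for the sum of the adjugate entries. -/
lemma sumAdjAsubIz_eq {N : ℕ} (A : Matrix (Fin N) (Fin N) ℚ) (s : ℕ) (hs : s ≤ N - 1)
    (hadj : (sumAdjIsubAz A).natDegree = N - 1 - s) :
    sumAdjAsubIz A = (-1) ^ (N - 1) * X ^ s * (sumAdjIsubAz A).reverse := by
  apply toLaurent_injective
  set t : ℚ[T;T⁻¹] := T 1 with ht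
  set φ : ℚ[X] →+* ℚ[T;T⁻¹] :=
    ((invert : ℚ[T;T⁻¹] ≃ₐ[ℚ] ℚ[T;T⁻¹]) : ℚ[T;T⁻¹] →+* ℚ[T;T⁻¹]).comp
      (toLaurent : ℚ[X] →+* ℚ[T;T⁻¹]) with hφ
  have hML : (A.map C - (X : ℚ[X]) • (1 : Matrix (Fin N) (Fin N) ℚ[X])).map toLaurent
      = A.map LaurentPolynomial.C - t • 1 := by
    ext i j : 1
    rcases eq_or_ne i j with h | h <;>
      simp [Matrix.map_apply, Matrix.sub_apply, Matrix.smul_apply, Matrix.one_apply, h,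
        Polynomial.toLaurent_C, Polynomial.toLaurent_X, smul_eq_mul, ht]
  have hinv : -t * T (-1) = -1 := by
    rw [neg_mul, ← T_add]
    norm_num
  have hsplit : A.map LaurentPolynomial.C - t • 1
      = (-t) • ((1 : Matrix (Fin N) (Fin N) ℚ[T;T⁻¹]) - (T (-1) : ℚ[T;T⁻¹]) • A.map LaurentPolynomial.C) := by
    rw [smul_sub, smul_smul, hinv]
    simp only [neg_smul, one_smul, sub_neg_eq_add]
    abel
  have hLHS : toLaurent (sumAdjAsubIz A)
      = (-t) ^ (N - 1) *
        sumEntries (adjugate ((1 : Matrix (Fin N) (Fin N) ℚ[T;T⁻¹])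
          - (T (-1) : ℚ[T;T⁻¹]) • A.map LaurentPolynomial.C)) := by
    rw [sumAdjAsubIz, ringHom_sumEntries, ← RingHom.mapMatrix_apply, RingHom.map_adjugate,
      RingHom.mapMatrix_apply, hML, hsplit, adjugate_smul, Fintype.card_fin, sumEntries_smul]
  have hMR : ((1 : Matrix (Fin N) (Fin N) ℚ[X]) - (X : ℚ[X]) • A.map C).map φ
      = (1 : Matrix (Fin N) (Fin N) ℚ[T;T⁻¹]) - (T (-1) : ℚ[T;T⁻¹]) • A.map LaurentPolynomial.C := by
    ext i j
    rcases eq_or_ne i j with h | h <;>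
      simp [hφ, Matrix.map_apply, Matrix.sub_apply, Matrix.smul_apply, Matrix.one_apply, h,
        Polynomial.toLaurent_C, Polynomial.toLaurent_X, smul_eq_mul]
  have hq : invert (toLaurent (sumAdjIsubAz A))
      = sumEntries (adjugate ((1 : Matrix (Fin N) (Fin N) ℚ[T;T⁻¹])
          - (T (-1) : ℚ[T;T⁻¹]) • A.map LaurentPolynomial.C)) := by
    have : invert (toLaurent (sumAdjIsubAz A)) = φ (sumAdjIsubAz A) := rfl
    rw [this, sumAdjIsubAz, ringHom_sumEntries, ← RingHom.mapMatrix_apply, RingHom.map_adjugate,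
      RingHom.mapMatrix_apply, hMR]
  have hRHS : toLaurent ((-1) ^ (N - 1) * X ^ s * (sumAdjIsubAz A).reverse)
      = (-1) ^ (N - 1) * T (s : ℤ) *
        (invert (toLaurent (sumAdjIsubAz A)) * T ((N - 1 - s : ℕ) : ℤ)) := by
    rw [_root_.map_mul, _root_.map_mul, toLaurent_reverse, hadj]
    simp [Polynomial.toLaurent_X_pow]
  have hT : (T (s : ℤ) : ℚ[T;T⁻¹]) * T ((N - 1 - s : ℕ) : ℤ) = T ((N - 1 : ℕ) : ℤ) := by
    rw [← T_add]
    congr 1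
    omega
  have hTpow : (-t) ^ (N - 1) = (-1) ^ (N - 1) * T ((N - 1 : ℕ) : ℤ) := by
    rw [neg_pow, ht, T_pow, mul_one]
  rw [hLHS, hRHS, ← hq, hTpow]
  rw [← hT]
  ring

end aux

/-- Suppose `deg det(I - A·z) = N - r` and `deg sum(adj(I - A·z)) = N - 1 - s`.  Then the
rational function `sum(adj(A - I·z))/det(A - I·z)` is defined at `z = 0` (the order of
vanishing at `0` of the numerator is at least that of the denominator) iff `s ≥ r`. -/
theorem stmt5 {N : ℕ} (A : Matrix (Fin N) (Fin N) ℚ) (r s : ℕ)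
    (hr : r ≤ N) (hN : 1 ≤ N) (hs : s ≤ N - 1)
    (hdet : (detIsubAz A).natDegree = N - r)
    (hadj : (sumAdjIsubAz A).natDegree = N - 1 - s) (hadj0 : sumAdjIsubAz A ≠ 0) :
    (detAsubIz A).rootMultiplicity 0 ≤ (sumAdjAsubIz A).rootMultiplicity 0 ↔ r ≤ s := by
  -- the determinant side
  have hchar0 : (A.charpoly : ℚ[X]) ≠ 0 := (charpoly_monic A).ne_zero
  have hP : detAsubIz A = (-1) ^ N * A.charpoly := by
    rw [detAsubIz, Matrix.charpoly, charmatrix]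
    have : A.map C - (X : ℚ[X]) • (1 : Matrix (Fin N) (Fin N) ℚ[X])
        = -(Matrix.scalar (Fin N) (X : ℚ[X]) - (C : ℚ →+* ℚ[X]).mapMatrix A) := by
      rw [Matrix.scalar_apply, ← Matrix.smul_one_eq_diagonal]
      simp [RingHom.mapMatrix_apply]
    rw [this, det_neg, Fintype.card_fin]
  have hcdeg : (A.charpoly).natDegree = N := by
    rw [charpoly_natDegree_eq_dim, Fintype.card_fin]
  have hrev : (A.charpoly).reverse = detIsubAz A := by
    rw [Matrix.reverse_charpoly]; rfl
  have htr : (A.charpoly).natTrailingDegree = r := by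
    have h1 := reverse_natDegree A.charpoly
    rw [hrev, hdet, hcdeg] at h1
    have h2 : (A.charpoly).natTrailingDegree ≤ N :=
      le_trans (natTrailingDegree_le_natDegree _) (le_of_eq hcdeg)
    omega
  have hrmP : (detAsubIz A).rootMultiplicity 0 = r := by
    rw [hP, rootMultiplicity_mul
        (mul_ne_zero (pow_ne_zero _ (neg_ne_zero.mpr (one_ne_zero))) hchar0),
      rootMultiplicity_eq_zero (by simp [IsRoot]),
      rootMultiplicity_eq_natTrailingDegree', htr, zero_add]
  -- the adjugate side
  have hrevq0 : (sumAdjIsubAz A).reverse ≠ 0 := by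
    simpa using hadj0
  have hrmQ : (sumAdjAsubIz A).rootMultiplicity 0 = s := by
    rw [sumAdjAsubIz_eq A s hs hadj]
    have hne1 : ((-1 : ℚ[X]) ^ (N - 1) * X ^ s) ≠ 0 :=
      mul_ne_zero (pow_ne_zero _ (neg_ne_zero.mpr one_ne_zero)) (pow_ne_zero _ X_ne_zero)
    rw [rootMultiplicity_mul (mul_ne_zero hne1 hrevq0),
      rootMultiplicity_mul hne1,
      rootMultiplicity_eq_zero (by simp [IsRoot]),
      rootMultiplicity_eq_natTrailingDegree' (p := (X : ℚ[X]) ^ s),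
      rootMultiplicity_eq_natTrailingDegree' (p := (sumAdjIsubAz A).reverse),
      natTrailingDegree_reverse, natTrailingDegree_X_pow, zero_add, add_zero]
  rw [hrmP, hrmQ]
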